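/- If G and H are formal power series with zero constant terms and F = G ∘ H is their composition, then the composita multiply: [x^n]F^k = ∑_{m=k}^{n} ([x^m]G^k)·([x^n]H^m) for all n ≥ k ≥ 1. -/

import Mathlib

open PowerSeries Finset

/-- Substitution of `H` (with zero constant term) into `G`: the composition `G(H(x))`. -/
noncomputable def pcomp {R : Type*} [CommRing R] (G H : PowerSeries R) : PowerSeries R :=
  PowerSeries.mk fun n => ∑ m ∈ range (n + 1), coeff m G * coeff n (H ^ m)

namespace PowerSeries

variable {R : Type*} [CommRing R]

theorem coeff_pow_of_lt {H : R⟦X⟧} (hH : constantCoeff H = 0) {m n : ℕ} (h : n < m) :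
    coeff n (H ^ m) = 0 :=
  coeff_of_lt_order n <|
    (Nat.cast_lt.mpr h).trans_le (le_order_pow_of_constantCoeff_eq_zero m hH)

theorem coeff_subst_eq_sum_range {G H : R⟦X⟧} (hH : constantCoeff H = 0) (n : ℕ) :
    coeff n (G.subst H) = ∑ m ∈ range (n + 1), coeff m G * coeff n (H ^ m) := by
  rw [coeff_subst' (HasSubst.of_constantCoeff_zero' hH)]
  simp only [smul_eq_mul]
  refine finsum_eq_sum_of_support_subset _ fun m hm => ?_
  by_contra hmn
  exact hm (by simp only [coeff_pow_of_lt hH (by simpa using hmn), mul_zero])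

end PowerSeries

theorem pcomp_eq_subst {R : Type*} [CommRing R] (G : PowerSeries R) {H : PowerSeries R}
    (hH : constantCoeff H = 0) : pcomp G H = G.subst H := by
  ext n
  rw [pcomp, coeff_mk, coeff_subst_eq_sum_range hH]

theorem pcomp_pow {R : Type*} [CommRing R] (G : PowerSeries R) {H : PowerSeries R}
    (hH : constantCoeff H = 0) (k : ℕ) : pcomp G H ^ k = pcomp (G ^ k) H := by
  rw [pcomp_eq_subst _ hH, pcomp_eq_subst _ hH, subst_pow (HasSubst.of_constantCoeff_zero' hH)]

theorem stmt_19_general {R : Type*} [CommRing R] (G H : PowerSeries R)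
    (hG0 : constantCoeff G = 0) (hH0 : constantCoeff H = 0)
    (F : PowerSeries R) (hF : F = pcomp G H)
    (n k : ℕ) :
    coeff n (F ^ k) = ∑ m ∈ Icc k n, coeff m (G ^ k) * coeff n (H ^ m) := by
  rw [hF, pcomp_pow G hH0, pcomp, coeff_mk]
  -- the terms with `m < k` vanish because `G ^ k` has order at least `k`
  refine (sum_subset (fun m hm => ?_) fun m hm hmk => ?_).symm
  · simp only [mem_Icc, mem_range] at hm ⊢
    omega
  · simp only [mem_Icc, mem_range] at hm hmk
    rw [coeff_pow_of_lt hG0 (by omega), zero_mul]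

theorem stmt_19 {R : Type*} [CommRing R] (G H : PowerSeries R)
    (hG0 : constantCoeff G = 0) (hH0 : constantCoeff H = 0)
    (F : PowerSeries R) (hF : F = pcomp G H)
    (n k : ℕ) (hk : 1 ≤ k) (hkn : k ≤ n) :
    coeff n (F ^ k) = ∑ m ∈ Icc k n, coeff m (G ^ k) * coeff n (H ^ m) :=
  stmt_19_general G H hG0 hH0 F hF n k
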